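/- Let l be a positive integer, n a nonzero integer, λ a nonnegative integer, 0 ≤ j ≤ |n|−1 and 1 ≤ u ≤ 2l−1. Then, for the Weil–Brezin transform associated to the lattice N_{2l} = ℤ × 2lℤ × ℤ: if n > 0, (W_n^{j,u}F_{n,λ}) ∘ φ = e^{πi(n+λ)} · W_n^{j',2l−u}F_{n,λ} where 0 ≤ j' ≤ n−1 is the representative of −j−1 mod n; and if n < 0, (W_n^{j,u}F_{n,λ}) ∘ φ = e^{πi(n+λ)} · W_n^{j'',2l−u}F_{n,λ} where 0 ≤ j'' ≤ |n|−1 is the representative of −j+1 mod |n|. -/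

import Mathlib

noncomputable section

abbrev H3 := ℝ × ℝ × ℝ

/-- the map φ(p,q,s) = (−p, −q, s + 1/2) -/
def phi : H3 → H3 := fun x => (-x.1, -x.2.1, x.2.2 + 1 / 2)

/-- Weil–Brezin transform associated to the lattice N_l -/
def WB (l : ℕ) (n j u : ℤ) (g : ℝ → ℂ) : H3 → ℂ := fun x =>
  Complex.exp (2 * Real.pi * Complex.I * (n : ℂ) * (x.2.2 : ℂ)) *
    ∑' k : ℤ,
      g (x.1 + (k : ℝ) + (j : ℝ) / |(n : ℝ)| + (u : ℝ) / ((l : ℝ) * (n : ℝ))) *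
        Complex.exp (2 * Real.pi * Complex.I * (n : ℂ) *
          ((((k : ℝ) + (j : ℝ) / |(n : ℝ)| + (u : ℝ) / ((l : ℝ) * (n : ℝ))) : ℝ) : ℂ) *
          (x.2.1 : ℂ))

/-- physicists' Hermite polynomials: H₀ = 1, H_{λ+1} = 2X·H_λ − H_λ' -/
def physHermite : ℕ → Polynomial ℝ
  | 0 => 1
  | (lam + 1) => 2 * Polynomial.X * physHermite lam - (physHermite lam).derivative

/-- F_{n,λ}(x) = H_λ(√(2π|n|) x) e^{−π|n|x²} -/
def Fnl (n : ℤ) (lam : ℕ) : ℝ → ℂ := fun x =>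
  (((physHermite lam).eval (Real.sqrt (2 * Real.pi * |(n : ℝ)|) * x) *
    Real.exp (-Real.pi * |(n : ℝ)| * x ^ 2) : ℝ) : ℂ)

/-!
The substitution `y ↦ -y` together with the reindexing `k ↦ -(k + m)` turns the lattice sum with
offset `a = j/|n| + u/(2ln)`, evaluated at `(-p, -q)`, into the one with offset `a'` at `(p, q)`
whenever `a + a' = m` is an integer, up to the parity factor of the window function. For `F_{n,λ}`
that factor is `(-1)^λ = e^{πiλ}`, the parity of `H_λ`, and the central shift `s ↦ s + 1/2`
contributes `e^{πin}`. With `u' = 2l - u` one gets `a + a' = (j + j' + sign n)/|n|`, an integer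
exactly when `j' ≡ -j - sign n (mod |n|)`.
-/

open Complex

open Polynomial in
lemma physHermite_comp_neg_X (lam : ℕ) :
    (physHermite lam).comp (-X) = (-1) ^ lam * physHermite lam := by
  induction lam with
  | zero => simp [physHermite]
  | succ m ih =>
    have hder : (derivative (physHermite m)).comp (-X) =
        -((-1) ^ m * derivative (physHermite m)) := by
      have h := congrArg derivative ih
      simp only [derivative_comp, derivative_neg, derivative_X, derivative_mul, derivative_pow,
        derivative_one] at h
      linear_combination -h
    simp only [physHermite, sub_comp, mul_comp, X_comp, ofNat_comp, ih, hder]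
    ring

lemma physHermite_eval_neg (lam : ℕ) (y : ℝ) :
    (physHermite lam).eval (-y) = (-1) ^ lam * (physHermite lam).eval y := by
  simpa using congrArg (Polynomial.eval y) (physHermite_comp_neg_X lam)

lemma Fnl_neg (n : ℤ) (lam : ℕ) (x : ℝ) : Fnl n lam (-x) = (-1) ^ lam * Fnl n lam x := by
  simp only [Fnl, mul_neg, physHermite_eval_neg, neg_sq]
  push_cast
  ring

lemma neg_one_pow_eq_exp_pi_mul_I (lam : ℕ) : (-1 : ℂ) ^ lam = exp (Real.pi * I * lam) := by
  rw [mul_comm, exp_nat_mul, exp_pi_mul_I]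

def wbShift (L : ℕ) (n j u : ℤ) : ℝ := (j : ℝ) / |(n : ℝ)| + (u : ℝ) / ((L : ℝ) * (n : ℝ))

def thetaSum (g : ℝ → ℂ) (n : ℤ) (a p q : ℝ) : ℂ :=
  ∑' k : ℤ,
    g (p + ((k : ℝ) + a)) * exp (2 * Real.pi * I * (n : ℂ) * (((k : ℝ) + a : ℝ) : ℂ) * (q : ℂ))

lemma WB_eq_thetaSum (L : ℕ) (n j u : ℤ) (g : ℝ → ℂ) (x : H3) :
    WB L n j u g x =
      exp (2 * Real.pi * I * (n : ℂ) * (x.2.2 : ℂ)) * thetaSum g n (wbShift L n j u) x.1 x.2.1 := by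
  simp only [WB, thetaSum, wbShift, add_assoc]

lemma thetaSum_neg {g : ℝ → ℂ} {c : ℂ} (hg : ∀ y, g (-y) = c * g y) (n : ℤ) {a a' : ℝ} {m : ℤ}
    (hm : a + a' = m) (p q : ℝ) :
    thetaSum g n a (-p) (-q) = c * thetaSum g n a' p q := by
  rw [thetaSum, thetaSum, ← tsum_mul_left, ← ((Equiv.addRight m).trans (Equiv.neg ℤ)).tsum_eq]
  refine tsum_congr fun k => ?_
  -- the reindexing `k ↦ -(k + m)` sends `k + a` to `-(k + a')`
  have hk : ((-(k + m) : ℤ) : ℝ) + a = -((k : ℝ) + a') := by push_cast; linarith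
  simp only [Equiv.trans_apply, Equiv.coe_addRight, Equiv.neg_apply]
  rw [hk, ← neg_add, hg]
  push_cast
  ring_nf

lemma exp_two_pi_I_mul_add_half (n : ℤ) (s : ℝ) :
    exp (2 * Real.pi * I * (n : ℂ) * ((s + 1 / 2 : ℝ) : ℂ)) =
      exp (Real.pi * I * n) * exp (2 * Real.pi * I * (n : ℂ) * (s : ℂ)) := by
  rw [← exp_add]; push_cast; ring_nf

theorem WB_comp_phi {g : ℝ → ℂ} {c : ℂ} (hg : ∀ y, g (-y) = c * g y) (L : ℕ) (n : ℤ)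
    {j u j' u' m : ℤ} (hm : wbShift L n j u + wbShift L n j' u' = m) (x : H3) :
    WB L n j u g (phi x) = exp (Real.pi * I * n) * c * WB L n j' u' g x := by
  obtain ⟨p, q, s⟩ := x
  rw [WB_eq_thetaSum, WB_eq_thetaSum]
  simp only [phi]
  rw [thetaSum_neg hg n hm, exp_two_pi_I_mul_add_half]
  ring

lemma wbShift_add_wbShift {L : ℕ} (hL : L ≠ 0) (n j j' : ℤ) {u u' : ℤ} (hu : u + u' = L) :
    wbShift L n j u + wbShift L n j' u' = ((j + j' + n.sign : ℤ) : ℝ) / |(n : ℝ)| := by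
  have hL' : (L : ℝ) ≠ 0 := Nat.cast_ne_zero.mpr hL
  have hu' : (u : ℝ) + u' = L := by exact_mod_cast hu
  unfold wbShift
  rcases lt_trichotomy n 0 with hn | rfl | hn
  · have hnR : (n : ℝ) < 0 := by exact_mod_cast hn
    rw [Int.sign_eq_neg_one_of_neg hn, abs_of_neg hnR]
    field_simp [hnR.ne]
    push_cast
    linear_combination hu'
  · simp
  · have hnR : (0 : ℝ) < n := by exact_mod_cast hn
    rw [Int.sign_eq_one_of_pos hn, abs_of_pos hnR]
    field_simp [hnR.ne']
    push_cast
    linear_combination hu'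

lemma WB_Fnl_comp_phi {L : ℕ} (hL : L ≠ 0) {n : ℤ} (hn : n ≠ 0) (lam : ℕ) {j u j' u' : ℤ}
    (hu : u + u' = L) (hdvd : |n| ∣ j + j' + n.sign) (x : H3) :
    WB L n j u (Fnl n lam) (phi x) =
      exp (Real.pi * I * ((n : ℂ) + (lam : ℂ))) * WB L n j' u' (Fnl n lam) x := by
  have hshift := wbShift_add_wbShift hL n j j' hu
  rw [← Int.cast_abs, ← Int.cast_div hdvd (Int.cast_ne_zero.mpr (abs_ne_zero.mpr hn))] at hshift
  rw [WB_comp_phi (Fnl_neg n lam) _ _ hshift, neg_one_pow_eq_exp_pi_mul_I, ← exp_add, ← mul_add]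

theorem WB_comp_phi_u_ne_zero_general (l : ℕ) (hl : 0 < l) (n : ℤ) (lam : ℕ)
    (j u : ℤ) :
    (0 < n →
      ∀ x : H3, WB (2 * l) n j u (Fnl n lam) (phi x) =
        Complex.exp (Real.pi * Complex.I * ((n : ℂ) + (lam : ℂ))) *
          WB (2 * l) n ((-j - 1) % n) (2 * (l : ℤ) - u) (Fnl n lam) x) ∧
    (n < 0 →
      ∀ x : H3, WB (2 * l) n j u (Fnl n lam) (phi x) =
        Complex.exp (Real.pi * Complex.I * ((n : ℂ) + (lam : ℂ))) *
          WB (2 * l) n ((-j + 1) % |n|) (2 * (l : ℤ) - u) (Fnl n lam) x) := by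
  have hL : 2 * l ≠ 0 := by omega
  have hu : u + (2 * (l : ℤ) - u) = ((2 * l : ℕ) : ℤ) := by push_cast; ring
  refine ⟨fun hn x => WB_Fnl_comp_phi hL hn.ne' lam hu ?_ x,
    fun hn x => WB_Fnl_comp_phi hL hn.ne lam hu ?_ x⟩
  · rw [abs_of_pos hn, Int.sign_eq_one_of_pos hn]
    convert (Int.mod_modEq (-j - 1) n).symm.dvd using 1
    ring
  · rw [Int.sign_eq_neg_one_of_neg hn]
    convert (Int.mod_modEq (-j + 1) |n|).symm.dvd using 1
    ring

/-- behaviour of the u ≠ 0 Weil–Brezin eigenfunctions (for the lattice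
N_{2l}) under pullback by φ. -/
theorem WB_comp_phi_u_ne_zero (l : ℕ) (hl : 0 < l) (n : ℤ) (hn : n ≠ 0) (lam : ℕ)
    (j u : ℤ) (hj0 : 0 ≤ j) (hj1 : j ≤ |n| - 1) (hu0 : 1 ≤ u) (hu1 : u ≤ 2 * (l : ℤ) - 1) :
    (0 < n →
      ∀ x : H3, WB (2 * l) n j u (Fnl n lam) (phi x) =
        Complex.exp (Real.pi * Complex.I * ((n : ℂ) + (lam : ℂ))) *
          WB (2 * l) n ((-j - 1) % n) (2 * (l : ℤ) - u) (Fnl n lam) x) ∧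
    (n < 0 →
      ∀ x : H3, WB (2 * l) n j u (Fnl n lam) (phi x) =
        Complex.exp (Real.pi * Complex.I * ((n : ℂ) + (lam : ℂ))) *
          WB (2 * l) n ((-j + 1) % |n|) (2 * (l : ℤ) - u) (Fnl n lam) x) :=
  WB_comp_phi_u_ne_zero_general l hl n lam j u

end
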